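/- Smoothness of the value function (Lemma 1 of the paper): Assume the parametrized policy class satisfies, for all θ, θ₁, θ₂ ∈ ℝ^d and all (s,a): θ ↦ log π_θ(a|s) is twice continuously differentiable, ‖∇_θ log π_θ(a|s)‖₂ ≤ G, and ‖∇_θ log π_{θ₁}(a|s) − ∇_θ log π_{θ₂}(a|s)‖₂ ≤ M‖θ₁−θ₂‖₂. Let h : S×A → ℝ with |h(s,a)| ≤ 1 for all (s,a). Then θ ↦ J_h(π_θ) is differentiable with Lipschitz-continuous gradient: ‖∇_θ J_h(π_{θ₁}) − ∇_θ J_h(π_{θ₂})‖₂ ≤ L_J ‖θ₁ − θ₂‖₂ for all θ₁, θ₂, where L_J = M/(1−γ)² + 2G²/(1−γ)³. -/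

import Mathlib

open scoped BigOperators
open Matrix

noncomputable section

/-- State-transition matrix `P_π(s,s') = ∑_a π(a|s) P(s'|s,a)` induced by policy `π`. -/
def Pmat {S A : Type*} [Fintype A] (P : S → A → S → ℝ) (π : S → A → ℝ) : Matrix S S ℝ :=
  Matrix.of fun s s' => ∑ a, π s a * P s a s'

/-- Discounted state-action occupancy measure
`d_ρ^π(s,a) = (1-γ) ∑ₜ γ^t (ρᵀ P_π^t)(s) π(a|s)`. -/
def occupancy {S A : Type*} [Fintype S] [DecidableEq S] [Fintype A]
    (P : S → A → S → ℝ) (γ : ℝ) (ρ : S → ℝ) (π : S → A → ℝ) (s : S) (a : A) : ℝ :=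
  (1 - γ) * (∑' t : ℕ, γ ^ t * Matrix.vecMul ρ (Pmat P π ^ t) s) * π s a

/-- Value vector `V_h^π = ∑ₜ γ^t P_π^t h_π` where `h_π(s) = ∑_a π(a|s) h(s,a)`. -/
def Vvec {S A : Type*} [Fintype S] [DecidableEq S] [Fintype A]
    (P : S → A → S → ℝ) (γ : ℝ) (h : S → A → ℝ) (π : S → A → ℝ) : S → ℝ :=
  ∑' t : ℕ, γ ^ t • (Pmat P π ^ t).mulVec (fun s => ∑ a, π s a * h s a)

/-- Scalar value `J_h(π) = ∑_s ρ(s) V_h^π(s)`. -/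
def Jval {S A : Type*} [Fintype S] [DecidableEq S] [Fintype A]
    (P : S → A → S → ℝ) (γ : ℝ) (ρ : S → ℝ) (h : S → A → ℝ) (π : S → A → ℝ) : ℝ :=
  ∑ s, ρ s * Vvec P γ h π s

/-- Gradient of the log-policy (score function) at parameter `θ`. -/
def gradLog {S A : Type*} {d : ℕ} (pc : EuclideanSpace ℝ (Fin d) → S → A → ℝ)
    (θ : EuclideanSpace ℝ (Fin d)) (s : S) (a : A) : EuclideanSpace ℝ (Fin d) :=
  gradient (fun θ' => Real.log (pc θ' s a)) θ

/-!
Write `J(θ) = ∑ₜ γᵗ Jₜ(θ)` with `Jₜ(θ) = ∑_{s,a} h(s,a) qₜ(θ)(s,a)`, where `qₜ(θ)` is the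
state-action distribution at time `t`. Call a nonnegative `C²` function `p` `(a, b)`-relatively
smooth if `‖Dp‖ ≤ a p` and `‖D²p‖ ≤ b p`. The policy `π_θ(a|s) = exp (log π_θ(a|s))` is
`(G, M + G²)`-relatively smooth; relative smoothness survives nonnegative combinations, and a
product of `(a, b)`- and `(a', b')`-relatively smooth functions is
`(a + a', b + b' + 2 a a')`-relatively smooth. By induction on `t`, `qₜ` is
`((t + 1) G, (t + 1) M + (t + 1)² G²)`-relatively smooth, and since `qₜ(θ)` is a probability
vector and `|h| ≤ 1` these are bounds on `‖DJₜ‖` and `‖D²Jₜ‖`. Summing against `γᵗ`, with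
`∑ₜ (t + 1) γᵗ = 1 / (1 - γ)²` and `∑ₜ (t + 1)² γᵗ ≤ 2 / (1 - γ)³`, gives the constant `L_J`.
-/

open Finset

section Geometric

variable {r : ℝ}

theorem hasSum_succ_mul_geometric (hr : ‖r‖ < 1) :
    HasSum (fun n : ℕ => ((n : ℝ) + 1) * r ^ n) (1 / (1 - r) ^ 2) := by
  simpa using hasSum_choose_mul_geometric_of_norm_lt_one 1 hr

theorem hasSum_succ_sq_mul_geometric (hr : ‖r‖ < 1) :
    HasSum (fun n : ℕ => ((n : ℝ) + 1) ^ 2 * r ^ n) (2 / (1 - r) ^ 3 - 1 / (1 - r) ^ 2) := by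
  -- `(n + 1) ^ 2 = 2 * (n + 2).choose 2 - (n + 1)`
  rw [show 2 / (1 - r) ^ 3 - 1 / (1 - r) ^ 2 = 2 * (1 / (1 - r) ^ (2 + 1)) - 1 / (1 - r) ^ 2
    by ring]
  refine (((hasSum_choose_mul_geometric_of_norm_lt_one 2 hr).mul_left 2).sub
    (hasSum_succ_mul_geometric hr)).congr_fun fun n => ?_
  rw [Nat.cast_choose_two]
  push_cast
  ring

end Geometric

theorem norm_gradient {F : Type*} [NormedAddCommGroup F] [InnerProductSpace ℝ F]
    [CompleteSpace F] (f : F → ℝ) (x : F) : ‖gradient f x‖ = ‖fderiv ℝ f x‖ :=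
  LinearIsometryEquiv.norm_map _ _

theorem norm_gradient_sub_gradient {F : Type*} [NormedAddCommGroup F] [InnerProductSpace ℝ F]
    [CompleteSpace F] (f g : F → ℝ) (x y : F) :
    ‖gradient f x - gradient g y‖ = ‖fderiv ℝ f x - fderiv ℝ g y‖ := by
  rw [gradient, gradient, ← map_sub, LinearIsometryEquiv.norm_map]

section Calculus

variable {E : Type*} [NormedAddCommGroup E] [NormedSpace ℝ E] {F : Type*} [NormedAddCommGroup F]
  [NormedSpace ℝ F]

theorem ContinuousLinearMap.norm_smul_le_of_nonneg {c k : ℝ} {f : E →L[ℝ] F} (hc : 0 ≤ c)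
    (hf : ‖f‖ ≤ k) : ‖c • f‖ ≤ c * k :=
  (f.opNorm_smul_le c).trans (by rw [Real.norm_of_nonneg hc]; exact mul_le_mul_of_nonneg_left hf hc)

theorem ContinuousLinearMap.norm_sum_smul_le {ι : Type*} [Fintype ι] (c : ι → ℝ)
    {v : ι → E →L[ℝ] F} {w : ι → ℝ} {k : ℝ} (hv : ∀ i, ‖v i‖ ≤ k * w i) :
    ‖∑ i, c i • v i‖ ≤ k * ∑ i, |c i| * w i := by
  rw [mul_sum]
  refine (norm_sum_le _ _).trans (sum_le_sum fun i _ => ?_)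
  calc ‖c i • v i‖ ≤ |c i| * (k * w i) :=
        ((v i).opNorm_smul_le (c i)).trans (mul_le_mul_of_nonneg_left (hv i) (abs_nonneg _))
    _ = k * (|c i| * w i) := by ring

theorem fderiv_sum_smul {ι : Type*} [Fintype ι] (c : ι → ℝ) {f : ι → E → F}
    (hf : ∀ i, Differentiable ℝ (f i)) :
    fderiv ℝ (fun x => ∑ i, c i • f i x) = fun x => ∑ i, c i • fderiv ℝ (f i) x :=
  funext fun x => (HasFDerivAt.fun_sum fun i _ => ((hf i x).hasFDerivAt.const_smul (c i))).fderiv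

theorem norm_fderiv_tsum_sub_le [CompleteSpace F] {f : ℕ → E → F} {f' : ℕ → E → E →L[ℝ] F}
    {f'' : ℕ → E → E →L[ℝ] E →L[ℝ] F} {A B : ℕ → ℝ} (hA : Summable A) (hB : Summable B)
    (hf : ∀ t x, HasFDerivAt (f t) (f' t x) x) (hf' : ∀ t x, HasFDerivAt (f' t) (f'' t x) x)
    (hA' : ∀ t x, ‖f' t x‖ ≤ A t) (hB' : ∀ t x, ‖f'' t x‖ ≤ B t) (x y : E) :
    ‖fderiv ℝ (fun z => ∑' t, f t z) x - fderiv ℝ (fun z => ∑' t, f t z) y‖ ≤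
      (∑' t, B t) * ‖x - y‖ := by
  by_cases! h : ∃ x₀, Summable fun t => f t x₀
  · obtain ⟨x₀, h₀⟩ := h
    have hs : ∀ z, Summable fun t => f' t z := fun z => hA.of_norm_bounded (hA' · z)
    have hlip : ∀ t, ‖f' t x - f' t y‖ ≤ B t * ‖x - y‖ := fun t =>
      convex_univ.norm_image_sub_le_of_norm_hasFDerivWithin_le
        (fun z _ => (hf' t z).hasFDerivWithinAt) (fun z _ => hB' t z)
        (Set.mem_univ y) (Set.mem_univ x)
    have hsB := hB.mul_right ‖x - y‖
    have hs_norm := hsB.of_nonneg_of_le (fun _ => norm_nonneg _) hlip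
    rw [(hasFDerivAt_tsum hA hf hA' h₀ x).fderiv, (hasFDerivAt_tsum hA hf hA' h₀ y).fderiv,
      ← (hs x).tsum_sub (hs y), ← tsum_mul_right]
    exact (norm_tsum_le_tsum_norm hs_norm).trans (hs_norm.tsum_le_tsum hlip hsB)
  · have h0 : (fun z => ∑' t, f t z) = 0 := funext fun z => tsum_eq_zero_of_not_summable (h z)
    have hB0 : 0 ≤ ∑' t, B t := tsum_nonneg fun t => (norm_nonneg (f'' t x)).trans (hB' t x)
    simpa [h0] using mul_nonneg hB0 (norm_nonneg (x - y))

theorem differentiable_tsum_geometric_and_norm_fderiv_sub_le {g : ℕ → E → ℝ} {γ G M : ℝ}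
    (hγ0 : 0 ≤ γ) (hγ1 : γ < 1) (hg : ∀ t, ContDiff ℝ 2 (g t))
    (hg' : ∀ t x, ‖fderiv ℝ (g t) x‖ ≤ (t + 1) * G)
    (hg'' : ∀ t x, ‖fderiv ℝ (fderiv ℝ (g t)) x‖ ≤ (t + 1) * M + (t + 1) ^ 2 * G ^ 2) :
    Differentiable ℝ (fun x => ∑' t, γ ^ t * g t x) ∧
      ∀ x y, ‖fderiv ℝ (fun x => ∑' t, γ ^ t * g t x) x -
          fderiv ℝ (fun x => ∑' t, γ ^ t * g t x) y‖
        ≤ (M / (1 - γ) ^ 2 + 2 * G ^ 2 / (1 - γ) ^ 3) * ‖x - y‖ := by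
  have hr : ‖γ‖ < 1 := by rwa [Real.norm_of_nonneg hγ0]
  have hf : ∀ t x, HasFDerivAt (fun x => γ ^ t * g t x) (γ ^ t • fderiv ℝ (g t) x) x :=
    fun t x => ((hg t).differentiable (by norm_num) x).hasFDerivAt.const_mul _
  have hf' : ∀ t x, HasFDerivAt (fun x => γ ^ t • fderiv ℝ (g t) x)
      (γ ^ t • fderiv ℝ (fderiv ℝ (g t)) x) x := fun t x =>
    (((hg t).fderiv_right (m := 1) (by norm_num)).differentiable one_ne_zero
      x).hasFDerivAt.fun_const_smul _
  have hA : HasSum (fun t : ℕ => γ ^ t * ((t + 1) * G)) (G * (1 / (1 - γ) ^ 2)) :=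
    ((hasSum_succ_mul_geometric hr).mul_left G).congr_fun fun t => by ring
  have hB : HasSum (fun t : ℕ => γ ^ t * ((t + 1) * M + (t + 1) ^ 2 * G ^ 2))
      (M * (1 / (1 - γ) ^ 2) + G ^ 2 * (2 / (1 - γ) ^ 3 - 1 / (1 - γ) ^ 2)) :=
    (((hasSum_succ_mul_geometric hr).mul_left M).add
      ((hasSum_succ_sq_mul_geometric hr).mul_left (G ^ 2))).congr_fun fun t => by ring
  have hA' : ∀ t x, ‖γ ^ t • fderiv ℝ (g t) x‖ ≤ γ ^ t * ((t + 1) * G) := fun t x =>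
    ContinuousLinearMap.norm_smul_le_of_nonneg (pow_nonneg hγ0 t) (hg' t x)
  have hB' : ∀ t x, ‖γ ^ t • fderiv ℝ (fderiv ℝ (g t)) x‖ ≤
      γ ^ t * ((t + 1) * M + (t + 1) ^ 2 * G ^ 2) := fun t x =>
    ContinuousLinearMap.norm_smul_le_of_nonneg (pow_nonneg hγ0 t) (hg'' t x)
  refine ⟨differentiable_tsum hA.summable hf hA', fun x y =>
    (norm_fderiv_tsum_sub_le hA.summable hB.summable hf hf' hA' hB' x y).trans ?_⟩
  rw [hB.tsum_eq]
  have : 0 ≤ G ^ 2 / (1 - γ) ^ 2 := by positivity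
  refine mul_le_mul_of_nonneg_right ?_ (norm_nonneg _)
  linarith [show M * (1 / (1 - γ) ^ 2) + G ^ 2 * (2 / (1 - γ) ^ 3 - 1 / (1 - γ) ^ 2) =
    M / (1 - γ) ^ 2 + 2 * G ^ 2 / (1 - γ) ^ 3 - G ^ 2 / (1 - γ) ^ 2 by ring]

structure RelSmooth (a b : ℝ) (p : E → ℝ) : Prop where
  nonneg : ∀ x, 0 ≤ p x
  contDiff : ContDiff ℝ 2 p
  norm_fderiv_le : ∀ x, ‖fderiv ℝ p x‖ ≤ a * p x
  norm_fderiv_fderiv_le : ∀ x, ‖fderiv ℝ (fderiv ℝ p) x‖ ≤ b * p x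

namespace RelSmooth

variable {a b a' b' : ℝ} {p q : E → ℝ}

theorem differentiable (hp : RelSmooth a b p) : Differentiable ℝ p :=
  hp.contDiff.differentiable (by norm_num)

theorem differentiable_fderiv (hp : RelSmooth a b p) : Differentiable ℝ (fderiv ℝ p) :=
  (hp.contDiff.fderiv_right (m := 1) (by norm_num)).differentiable one_ne_zero

theorem nonneg_bounds_of_pos (hp : RelSmooth a b p) {x : E} (hx : 0 < p x) : 0 ≤ a ∧ 0 ≤ b :=
  ⟨nonneg_of_mul_nonneg_left ((norm_nonneg _).trans (hp.norm_fderiv_le x)) hx,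
    nonneg_of_mul_nonneg_left
      ((norm_nonneg (fderiv ℝ (fderiv ℝ p) x)).trans (hp.norm_fderiv_fderiv_le x)) hx⟩

theorem const {c : ℝ} (hc : 0 ≤ c) : RelSmooth 0 0 fun _ : E => c where
  nonneg _ := hc
  contDiff := contDiff_const
  norm_fderiv_le _ := by simp
  norm_fderiv_fderiv_le _ := by simp [norm_zero (E := E →L[ℝ] E →L[ℝ] ℝ)]

theorem mono (hp : RelSmooth a b p) (ha : a ≤ a') (hb : b ≤ b') : RelSmooth a' b' p where
  nonneg := hp.nonneg
  contDiff := hp.contDiff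
  norm_fderiv_le x := (hp.norm_fderiv_le x).trans (mul_le_mul_of_nonneg_right ha (hp.nonneg x))
  norm_fderiv_fderiv_le x :=
    (hp.norm_fderiv_fderiv_le x).trans (mul_le_mul_of_nonneg_right hb (hp.nonneg x))

theorem mul (hp : RelSmooth a b p) (hq : RelSmooth a' b' q) :
    RelSmooth (a + a') (b + b' + 2 * a * a') fun x => p x * q x := by
  have hD : fderiv ℝ (fun x => p x * q x) = fun x => p x • fderiv ℝ q x + q x • fderiv ℝ p x :=
    funext fun x => fderiv_mul (hp.differentiable x) (hq.differentiable x)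
  have hD2 : ∀ x, HasFDerivAt (fderiv ℝ fun x => p x * q x)
      ((p x • fderiv ℝ (fderiv ℝ q) x + (fderiv ℝ p x).smulRight (fderiv ℝ q x)) +
        (q x • fderiv ℝ (fderiv ℝ p) x + (fderiv ℝ q x).smulRight (fderiv ℝ p x))) x := fun x => by
    rw [hD]
    exact ((hp.differentiable x).hasFDerivAt.smul (hq.differentiable_fderiv x).hasFDerivAt).add
      ((hq.differentiable x).hasFDerivAt.smul (hp.differentiable_fderiv x).hasFDerivAt)
  refine ⟨fun x => mul_nonneg (hp.nonneg x) (hq.nonneg x), hp.contDiff.mul hq.contDiff,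
    fun x => ?_, fun x => ?_⟩
  · rw [hD]
    calc ‖p x • fderiv ℝ q x + q x • fderiv ℝ p x‖
        ≤ p x * (a' * q x) + q x * (a * p x) :=
          (norm_add_le _ _).trans (add_le_add
            (ContinuousLinearMap.norm_smul_le_of_nonneg (hp.nonneg x) (hq.norm_fderiv_le x))
            (ContinuousLinearMap.norm_smul_le_of_nonneg (hq.nonneg x) (hp.norm_fderiv_le x)))
      _ = (a + a') * (p x * q x) := by ring
  · have hpq := mul_le_mul (hp.norm_fderiv_le x) (hq.norm_fderiv_le x) (norm_nonneg _)
      ((norm_nonneg _).trans (hp.norm_fderiv_le x))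
    rw [(hD2 x).fderiv]
    calc _ ≤ (p x * (b' * q x) + a * p x * (a' * q x)) +
          (q x * (b * p x) + a' * q x * (a * p x)) := by
          refine (norm_add_le (E := E →L[ℝ] E →L[ℝ] ℝ) _ _).trans (add_le_add
            ((norm_add_le (E := E →L[ℝ] E →L[ℝ] ℝ) _ _).trans (add_le_add ?_ ?_))
            ((norm_add_le (E := E →L[ℝ] E →L[ℝ] ℝ) _ _).trans (add_le_add ?_ ?_)))
          · exact ContinuousLinearMap.norm_smul_le_of_nonneg (hp.nonneg x)
              (hq.norm_fderiv_fderiv_le x)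
          · rwa [ContinuousLinearMap.norm_smulRight_apply]
          · exact ContinuousLinearMap.norm_smul_le_of_nonneg (hq.nonneg x)
              (hp.norm_fderiv_fderiv_le x)
          · rw [ContinuousLinearMap.norm_smulRight_apply, mul_comm]; linarith
      _ = (b + b' + 2 * a * a') * (p x * q x) := by ring

theorem of_log [Nontrivial E] {G M : ℝ} (hpos : ∀ x, 0 < p x)
    (hC2 : ContDiff ℝ 2 fun x => Real.log (p x))
    (hG : ∀ x, ‖fderiv ℝ (fun x => Real.log (p x)) x‖ ≤ G)
    (hM : ∀ x y, ‖fderiv ℝ (fun x => Real.log (p x)) x - fderiv ℝ (fun x => Real.log (p x)) y‖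
      ≤ M * ‖x - y‖) :
    RelSmooth G (M + G ^ 2) p := by
  set ℓ := fun x => Real.log (p x)
  have hexp : ∀ x, Real.exp (ℓ x) = p x := fun x => Real.exp_log (hpos x)
  have hℓ : Differentiable ℝ ℓ := hC2.differentiable (by norm_num)
  have hℓ' : Differentiable ℝ (fderiv ℝ ℓ) :=
    (hC2.fderiv_right (m := 1) (by norm_num)).differentiable one_ne_zero
  have hp : ContDiff ℝ 2 p := by simpa only [hexp] using hC2.exp
  have hD : ∀ x, HasFDerivAt p (p x • fderiv ℝ ℓ x) x := fun x => by
    simpa only [hexp] using (hℓ x).hasFDerivAt.exp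
  have hDp : fderiv ℝ p = fun x => p x • fderiv ℝ ℓ x := funext fun x => (hD x).fderiv
  have hM0 : 0 ≤ M := by
    obtain ⟨x, hx⟩ := exists_ne (0 : E)
    have := (norm_nonneg _).trans (hM x 0)
    rw [sub_zero] at this
    exact nonneg_of_mul_nonneg_left this (norm_pos_iff.2 hx)
  have hℓ2 : ∀ x, ‖fderiv ℝ (fderiv ℝ ℓ) x‖ ≤ M := fun x =>
    norm_fderiv_le_of_lip' ℝ hM0 (Filter.Eventually.of_forall fun y => hM y x)
  have hDp_le : ∀ x, ‖p x • fderiv ℝ ℓ x‖ ≤ G * p x := fun x => by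
    rw [mul_comm]
    exact ContinuousLinearMap.norm_smul_le_of_nonneg (hpos x).le (hG x)
  refine ⟨fun x => (hpos x).le, hp, fun x => by rw [hDp]; exact hDp_le x, fun x => ?_⟩
  rw [hDp, ((hD x).fun_smul (hℓ' x).hasFDerivAt).fderiv]
  calc _ ≤ p x * M + G * p x * G :=
        (norm_add_le (E := E →L[ℝ] E →L[ℝ] ℝ) _ _).trans (add_le_add
          (ContinuousLinearMap.norm_smul_le_of_nonneg (hpos x).le (hℓ2 x))
          (by rw [ContinuousLinearMap.norm_smulRight_apply]
              exact mul_le_mul (hDp_le x) (hG x) (norm_nonneg _)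
                ((norm_nonneg _).trans (hDp_le x))))
    _ = (M + G ^ 2) * p x := by ring

variable {ι : Type*} [Fintype ι] {p : ι → E → ℝ} (c : ι → ℝ)

theorem fderiv_sum_mul (hp : ∀ i, RelSmooth a b (p i)) :
    fderiv ℝ (fun x => ∑ i, c i * p i x) = fun x => ∑ i, c i • fderiv ℝ (p i) x := by
  simpa only [smul_eq_mul] using fderiv_sum_smul c fun i => (hp i).differentiable

theorem norm_fderiv_sum_mul_le (hp : ∀ i, RelSmooth a b (p i)) (x : E) :
    ‖fderiv ℝ (fun x => ∑ i, c i * p i x) x‖ ≤ a * ∑ i, |c i| * p i x := by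
  rw [fderiv_sum_mul c hp]
  exact ContinuousLinearMap.norm_sum_smul_le c fun i => (hp i).norm_fderiv_le x

theorem norm_fderiv_fderiv_sum_mul_le (hp : ∀ i, RelSmooth a b (p i)) (x : E) :
    ‖fderiv ℝ (fderiv ℝ fun x => ∑ i, c i * p i x) x‖ ≤ b * ∑ i, |c i| * p i x := by
  rw [fderiv_sum_mul c hp, fderiv_sum_smul c fun i => (hp i).differentiable_fderiv]
  exact ContinuousLinearMap.norm_sum_smul_le c fun i => (hp i).norm_fderiv_fderiv_le x

theorem contDiff_sum_mul (hp : ∀ i, RelSmooth a b (p i)) :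
    ContDiff ℝ 2 fun x => ∑ i, c i * p i x :=
  ContDiff.sum fun i _ => contDiff_const.mul (hp i).contDiff

theorem sum_mul (hp : ∀ i, RelSmooth a b (p i)) (hc : ∀ i, 0 ≤ c i) :
    RelSmooth a b fun x => ∑ i, c i * p i x := by
  have habs : ∀ x, ∑ i, |c i| * p i x = ∑ i, c i * p i x := fun x => by
    simp only [abs_of_nonneg (hc _)]
  refine ⟨fun x => sum_nonneg fun i _ => mul_nonneg (hc i) ((hp i).nonneg x),
    contDiff_sum_mul c hp, fun x => ?_, fun x => ?_⟩
  · simpa only [habs] using norm_fderiv_sum_mul_le c hp x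
  · simpa only [habs] using norm_fderiv_fderiv_sum_mul_le c hp x

theorem norm_fderiv_sum_mul_le_of_sum_eq_one (hp : ∀ i, RelSmooth a b (p i))
    (hp1 : ∀ x, ∑ i, p i x = 1) (hc : ∀ i, |c i| ≤ 1) (x : E) :
    ‖fderiv ℝ (fun x => ∑ i, c i * p i x) x‖ ≤ a ∧
      ‖fderiv ℝ (fderiv ℝ fun x => ∑ i, c i * p i x) x‖ ≤ b := by
  obtain ⟨i, -, hi⟩ : ∃ i ∈ univ, (0 : ℝ) < p i x := exists_lt_of_sum_lt (by simp [hp1 x])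
  obtain ⟨ha, hb⟩ := (hp i).nonneg_bounds_of_pos hi
  have hw : ∑ i, |c i| * p i x ≤ 1 := (hp1 x) ▸ sum_le_sum fun i _ =>
    mul_le_of_le_one_left ((hp i).nonneg x) (hc i)
  exact ⟨(norm_fderiv_sum_mul_le c hp x).trans (mul_le_of_le_one_right ha hw),
    (norm_fderiv_fderiv_sum_mul_le c hp x).trans (mul_le_of_le_one_right hb hw)⟩

end RelSmooth

end Calculus

section MarkovChain

variable {S A : Type*} [Fintype S] [DecidableEq S] [Fintype A]

theorem Pmat_mem_rowStochastic {P : S → A → S → ℝ} (hP0 : ∀ s a s', 0 ≤ P s a s')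
    (hP1 : ∀ s a, ∑ s', P s a s' = 1) {π : S → A → ℝ} (hπ0 : ∀ s a, 0 ≤ π s a)
    (hπ1 : ∀ s, ∑ a, π s a = 1) : Pmat P π ∈ rowStochastic ℝ S := by
  refine mem_rowStochastic_iff_sum.2
    ⟨fun s s' => sum_nonneg fun a _ => mul_nonneg (hπ0 s a) (hP0 s a s'), fun s => ?_⟩
  simp only [Pmat, of_apply]
  rw [sum_comm]
  simp [← mul_sum, hP1, hπ1]

theorem abs_mulVec_le_one_of_mem_rowStochastic {M : Matrix S S ℝ}
    (hM : M ∈ rowStochastic ℝ S) {v : S → ℝ} (hv : ∀ s, |v s| ≤ 1) (s : S) :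
    |(M *ᵥ v) s| ≤ 1 :=
  calc |∑ j, M s j * v j| ≤ ∑ j, |M s j * v j| := abs_sum_le_sum_abs _ _
    _ ≤ ∑ j, M s j := sum_le_sum fun j _ => by
        rw [abs_mul, abs_of_nonneg (nonneg_of_mem_rowStochastic hM)]
        exact mul_le_of_le_one_right (nonneg_of_mem_rowStochastic hM) (hv j)
    _ = 1 := sum_row_of_mem_rowStochastic hM s

theorem dotProduct_tsum_geometric_pow_mulVec {M : Matrix S S ℝ} (hM : M ∈ rowStochastic ℝ S)
    {v : S → ℝ} (hv : ∀ s, |v s| ≤ 1) {γ : ℝ} (hγ0 : 0 ≤ γ) (hγ1 : γ < 1) (ρ : S → ℝ) :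
    ρ ⬝ᵥ ∑' t : ℕ, γ ^ t • (M ^ t *ᵥ v) = ∑' t : ℕ, γ ^ t * (ρ ᵥ* M ^ t ⬝ᵥ v) := by
  have hs : ∀ s, Summable fun t : ℕ => (γ ^ t • (M ^ t *ᵥ v)) s := fun s =>
    (summable_geometric_of_lt_one hγ0 hγ1).of_norm_bounded fun t => by
      rw [Pi.smul_apply, smul_eq_mul, norm_mul, norm_pow, Real.norm_of_nonneg hγ0]
      exact mul_le_of_le_one_right (pow_nonneg hγ0 t)
        (abs_mulVec_le_one_of_mem_rowStochastic (pow_mem hM t) hv s)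
  calc ρ ⬝ᵥ ∑' t : ℕ, γ ^ t • (M ^ t *ᵥ v)
      = ∑ s, ∑' t : ℕ, ρ s * (γ ^ t • (M ^ t *ᵥ v)) s := by
        simp only [dotProduct, tsum_apply (Pi.summable.2 hs), tsum_mul_left]
    _ = ∑' t : ℕ, ρ ⬝ᵥ (γ ^ t • (M ^ t *ᵥ v)) :=
        (Summable.tsum_finsetSum fun s _ => (hs s).mul_left (ρ s)).symm
    _ = ∑' t : ℕ, γ ^ t * (ρ ᵥ* M ^ t ⬝ᵥ v) := by
        simp only [dotProduct_smul, dotProduct_mulVec, smul_eq_mul]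

def stateDist (P : S → A → S → ℝ) (ρ : S → ℝ) (π : S → A → ℝ) (t : ℕ) : S → ℝ :=
  ρ ᵥ* Pmat P π ^ t

def stateActionDist (P : S → A → S → ℝ) (ρ : S → ℝ) (π : S → A → ℝ) (t : ℕ) (x : S × A) : ℝ :=
  stateDist P ρ π t x.1 * π x.1 x.2

theorem stateDist_zero (P : S → A → S → ℝ) (ρ : S → ℝ) (π : S → A → ℝ) :
    stateDist P ρ π 0 = ρ := by
  simp [stateDist]

theorem stateDist_succ (P : S → A → S → ℝ) (ρ : S → ℝ) (π : S → A → ℝ) (t : ℕ) (s' : S) :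
    stateDist P ρ π (t + 1) s' = ∑ x : S × A, P x.1 x.2 s' * stateActionDist P ρ π t x := by
  rw [stateDist, pow_succ, ← vecMul_vecMul, Fintype.sum_prod_type]
  refine sum_congr rfl fun s _ => ?_
  simp only [Pmat, of_apply, stateActionDist, stateDist, mul_sum]
  exact sum_congr rfl fun a _ => by ring

theorem sum_stateActionDist {P : S → A → S → ℝ} (hP0 : ∀ s a s', 0 ≤ P s a s')
    (hP1 : ∀ s a, ∑ s', P s a s' = 1) {π : S → A → ℝ} (hπ0 : ∀ s a, 0 ≤ π s a)
    (hπ1 : ∀ s, ∑ a, π s a = 1) {ρ : S → ℝ} (hρ1 : ∑ s, ρ s = 1) (t : ℕ) :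
    ∑ x, stateActionDist P ρ π t x = 1 := by
  have hu := vecMul_dotProduct_one_eq_one_rowStochastic
    (pow_mem (Pmat_mem_rowStochastic hP0 hP1 hπ0 hπ1) t) ((dotProduct_one ρ).trans hρ1)
  rw [dotProduct_one] at hu
  simp only [stateActionDist, stateDist, Fintype.sum_prod_type, ← mul_sum, hπ1, mul_one, hu]

theorem Jval_eq_tsum {P : S → A → S → ℝ} (hP0 : ∀ s a s', 0 ≤ P s a s')
    (hP1 : ∀ s a, ∑ s', P s a s' = 1) {π : S → A → ℝ} (hπ0 : ∀ s a, 0 ≤ π s a)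
    (hπ1 : ∀ s, ∑ a, π s a = 1) {h : S → A → ℝ} (hh : ∀ s a, |h s a| ≤ 1) {γ : ℝ}
    (hγ0 : 0 ≤ γ) (hγ1 : γ < 1) (ρ : S → ℝ) :
    Jval P γ ρ h π = ∑' t : ℕ, γ ^ t * ∑ x : S × A, h x.1 x.2 * stateActionDist P ρ π t x := by
  have hv : ∀ s, |∑ a, π s a * h s a| ≤ 1 := fun s =>
    calc |∑ a, π s a * h s a| ≤ ∑ a, |π s a * h s a| := abs_sum_le_sum_abs _ _
      _ ≤ ∑ a, π s a := sum_le_sum fun a _ => by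
          rw [abs_mul, abs_of_nonneg (hπ0 s a)]
          exact mul_le_of_le_one_right (hπ0 s a) (hh s a)
      _ = 1 := hπ1 s
  change ρ ⬝ᵥ Vvec P γ h π = _
  rw [Vvec, dotProduct_tsum_geometric_pow_mulVec (Pmat_mem_rowStochastic hP0 hP1 hπ0 hπ1) hv
    hγ0 hγ1]
  refine tsum_congr fun t => congrArg (γ ^ t * ·) ?_
  rw [dotProduct, Fintype.sum_prod_type]
  refine sum_congr rfl fun s _ => ?_
  simp only [stateActionDist, stateDist, mul_sum]
  exact sum_congr rfl fun a _ => by ring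

variable {E : Type*} [NormedAddCommGroup E] [NormedSpace ℝ E] {P : S → A → S → ℝ} {ρ : S → ℝ}
  {pc : E → S → A → ℝ} {G M : ℝ}

theorem relSmooth_stateActionDist_of_stateDist {t : ℕ}
    (hu : ∀ s, RelSmooth (t * G) (t * M + t ^ 2 * G ^ 2) fun θ => stateDist P ρ (pc θ) t s)
    (hπ : ∀ s a, RelSmooth G (M + G ^ 2) fun θ => pc θ s a) (x : S × A) :
    RelSmooth ((t + 1) * G) ((t + 1) * M + (t + 1) ^ 2 * G ^ 2)
      fun θ => stateActionDist P ρ (pc θ) t x :=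
  ((hu x.1).mul (hπ x.1 x.2)).mono (le_of_eq (by ring)) (le_of_eq (by ring))

theorem relSmooth_stateDist (hP0 : ∀ s a s', 0 ≤ P s a s') (hρ0 : ∀ s, 0 ≤ ρ s)
    (hπ : ∀ s a, RelSmooth G (M + G ^ 2) fun θ => pc θ s a) (t : ℕ) (s : S) :
    RelSmooth (t * G) (t * M + t ^ 2 * G ^ 2) fun θ => stateDist P ρ (pc θ) t s := by
  induction t generalizing s with
  | zero => simpa [stateDist_zero] using RelSmooth.const (hρ0 s)
  | succ t ih =>
    simp only [stateDist_succ]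
    push_cast
    exact RelSmooth.sum_mul _ (relSmooth_stateActionDist_of_stateDist ih hπ) fun _ => hP0 _ _ _

theorem relSmooth_stateActionDist (hP0 : ∀ s a s', 0 ≤ P s a s') (hρ0 : ∀ s, 0 ≤ ρ s)
    (hπ : ∀ s a, RelSmooth G (M + G ^ 2) fun θ => pc θ s a) (t : ℕ) (x : S × A) :
    RelSmooth ((t + 1) * G) ((t + 1) * M + (t + 1) ^ 2 * G ^ 2)
      fun θ => stateActionDist P ρ (pc θ) t x :=
  relSmooth_stateActionDist_of_stateDist (relSmooth_stateDist hP0 hρ0 hπ t) hπ x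

end MarkovChain

theorem stmt10_general {S A : Type*} [Fintype S] [DecidableEq S] [Fintype A]
    {d : ℕ}
    (P : S → A → S → ℝ) (hP0 : ∀ s a s', 0 ≤ P s a s') (hP1 : ∀ s a, ∑ s', P s a s' = 1)
    (γ : ℝ) (hγ0 : 0 < γ) (hγ1 : γ < 1)
    (ρ : S → ℝ) (hρ0 : ∀ s, 0 ≤ ρ s) (hρ1 : ∑ s, ρ s = 1)
    (pc : EuclideanSpace ℝ (Fin d) → S → A → ℝ)
    (hpos : ∀ θ s a, 0 < pc θ s a) (hnorm : ∀ θ s, ∑ a, pc θ s a = 1)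
    (hC2 : ∀ s a, ContDiff ℝ 2 fun θ => Real.log (pc θ s a))
    (G : ℝ) (hG : ∀ θ s a, ‖gradLog pc θ s a‖ ≤ G)
    (M : ℝ) (hM : ∀ θ₁ θ₂ s a, ‖gradLog pc θ₁ s a - gradLog pc θ₂ s a‖ ≤ M * ‖θ₁ - θ₂‖)
    (h : S → A → ℝ) (hh : ∀ s a, |h s a| ≤ 1) :
    Differentiable ℝ (fun θ => Jval P γ ρ h (pc θ)) ∧
    ∀ θ₁ θ₂, ‖gradient (fun θ' => Jval P γ ρ h (pc θ')) θ₁ -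
        gradient (fun θ' => Jval P γ ρ h (pc θ')) θ₂‖
      ≤ (M / (1 - γ) ^ 2 + 2 * G ^ 2 / (1 - γ) ^ 3) * ‖θ₁ - θ₂‖ := by
  rcases subsingleton_or_nontrivial (EuclideanSpace ℝ (Fin d)) with hd | hd
  · exact ⟨differentiable_of_subsingleton, fun θ₁ θ₂ => by simp [Subsingleton.elim θ₁ θ₂]⟩
  have hπ : ∀ s a, RelSmooth G (M + G ^ 2) fun θ => pc θ s a := fun s a =>
    .of_log (hpos · s a) (hC2 s a) (fun θ => norm_gradient _ θ ▸ hG θ s a)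
      (fun θ₁ θ₂ => norm_gradient_sub_gradient _ _ θ₁ θ₂ ▸ hM θ₁ θ₂ s a)
  have hq := relSmooth_stateActionDist hP0 hρ0 hπ
  have hq1 : ∀ t θ, ∑ x, stateActionDist P ρ (pc θ) t x = 1 := fun t θ =>
    sum_stateActionDist hP0 hP1 (fun s a => (hpos θ s a).le) (hnorm θ) hρ1 t
  have hJ : (fun θ => Jval P γ ρ h (pc θ)) =
      fun θ => ∑' t : ℕ, γ ^ t * ∑ x : S × A, h x.1 x.2 * stateActionDist P ρ (pc θ) t x :=
    funext fun θ => Jval_eq_tsum hP0 hP1 (fun s a => (hpos θ s a).le) (hnorm θ) hh hγ0.le hγ1 ρ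
  have hbounds := fun t => RelSmooth.norm_fderiv_sum_mul_le_of_sum_eq_one _ (hq t)
    (hq1 t) (fun x => hh x.1 x.2)
  obtain ⟨hdiff, hlip⟩ := differentiable_tsum_geometric_and_norm_fderiv_sub_le hγ0.le hγ1
    (fun t => RelSmooth.contDiff_sum_mul _ (hq t)) (fun t θ => (hbounds t θ).1)
    (fun t θ => (hbounds t θ).2)
  refine ⟨hJ ▸ hdiff, fun θ₁ θ₂ => ?_⟩
  rw [norm_gradient_sub_gradient, hJ]
  exact hlip θ₁ θ₂

/-- Lemma 1 of the paper. Under twice continuous differentiability of the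
log-policy, the score bound `G` and score smoothness `M`, the value `θ ↦ J_h(π_θ)` for
`|h| ≤ 1` is differentiable with `L_J`-Lipschitz gradient, where
`L_J = M/(1-γ)² + 2G²/(1-γ)³`. -/
theorem stmt10 {S A : Type*} [Fintype S] [DecidableEq S] [Fintype A] [Nonempty S] [Nonempty A]
    {d : ℕ}
    (P : S → A → S → ℝ) (hP0 : ∀ s a s', 0 ≤ P s a s') (hP1 : ∀ s a, ∑ s', P s a s' = 1)
    (γ : ℝ) (hγ0 : 0 < γ) (hγ1 : γ < 1)
    (ρ : S → ℝ) (hρ0 : ∀ s, 0 ≤ ρ s) (hρ1 : ∑ s, ρ s = 1)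
    (pc : EuclideanSpace ℝ (Fin d) → S → A → ℝ)
    (hpos : ∀ θ s a, 0 < pc θ s a) (hnorm : ∀ θ s, ∑ a, pc θ s a = 1)
    (hC2 : ∀ s a, ContDiff ℝ 2 fun θ => Real.log (pc θ s a))
    (G : ℝ) (hG : ∀ θ s a, ‖gradLog pc θ s a‖ ≤ G)
    (M : ℝ) (hM : ∀ θ₁ θ₂ s a, ‖gradLog pc θ₁ s a - gradLog pc θ₂ s a‖ ≤ M * ‖θ₁ - θ₂‖)
    (h : S → A → ℝ) (hh : ∀ s a, |h s a| ≤ 1) :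
    Differentiable ℝ (fun θ => Jval P γ ρ h (pc θ)) ∧
    ∀ θ₁ θ₂, ‖gradient (fun θ' => Jval P γ ρ h (pc θ')) θ₁ -
        gradient (fun θ' => Jval P γ ρ h (pc θ')) θ₂‖
      ≤ (M / (1 - γ) ^ 2 + 2 * G ^ 2 / (1 - γ) ^ 3) * ‖θ₁ - θ₂‖ :=
  stmt10_general P hP0 hP1 γ hγ0 hγ1 ρ hρ0 hρ1 pc hpos hnorm hC2 G hG M hM h hh
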